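/- arXiv:1502.01918 — 5 statements merged into one kernel-verified Lean document; each statement's English description precedes it below -/
import Mathlib

section
/- Let ψ be a strict Archimedean generator, let F̄_0,…,F̄_d be survival functions, and let X_0,X_1,…,X_d be nonnegative real random variables on a probability space (Ω,𝓕,ℙ) such that ℙ(X_0>x_0, X_1>x_1, …, X_d>x_d) = ψ(∑_{i=0}^d ψ^{-1}(F̄_i(x_i))) for all (x_0,…,x_d)∈[0,∞)^{d+1}. Define the default times τ_k = min(X_0, X_k) for k=1,…,d. Then for all (t_1,…,t_d)∈[0,∞)^d one has ℙ(τ_1>t_1,…,τ_d>t_d) = ψ( ψ^{-1}(F̄_0(max_{1≤k≤d} t_k)) + ∑_{k=1}^d ψ^{-1}(F̄_k(t_k)) ). -/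
open Set MeasureTheory

/-- A survival function: continuous, strictly decreasing on `[0,∞)`, equal to `1` at `0`,
tending to `0` at `+∞`, with values in `(0,1]` on `[0,∞)`. -/
structure SurvFun where
  toFun : ℝ → ℝ
  continuousOn : ContinuousOn toFun (Ici 0)
  strictAntiOn : StrictAntiOn toFun (Ici 0)
  map_zero : toFun 0 = 1
  tendsto_atTop : Filter.Tendsto toFun Filter.atTop (nhds 0)
  mapsTo : MapsTo toFun (Ici 0) (Ioc 0 1)

/-- A strict Archimedean generator: a continuous strictly decreasing bijection of `[0,∞)`
onto `(0,1]` with `ψ 0 = 1` and `ψ x → 0` as `x → ∞`, together with its inverse. -/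
structure ArchGen extends SurvFun where
  bijOn : BijOn toFun (Ici 0) (Ioc 0 1)
  inv : ℝ → ℝ
  inv_mapsTo : MapsTo inv (Ioc 0 1) (Ici 0)
  leftInv : ∀ x ∈ Ici (0:ℝ), inv (toFun x) = x
  rightInv : ∀ u ∈ Ioc (0:ℝ) 1, toFun (inv u) = u

/-- In the exchangeable Archimedean contagion model, the joint survival
function of the default times `τ_k = min(X_0, X_k)` is
`ψ(ψ⁻¹(F̄_0(max_k t_k)) + ∑_k ψ⁻¹(F̄_k(t_k)))`. -/
theorem joint_survival_of_default_times
    {Ω : Type*} [MeasureSpace Ω] [IsProbabilityMeasure (volume : Measure Ω)]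
    {d : ℕ} (G : ArchGen) (F0 : SurvFun) (F : Fin (d + 1) → SurvFun)
    (X0 : Ω → ℝ) (X : Fin (d + 1) → Ω → ℝ)
    (hX0 : ∀ ω, 0 ≤ X0 ω) (hX : ∀ k ω, 0 ≤ X k ω)
    (hjoint : ∀ x0 : ℝ, 0 ≤ x0 → ∀ x : Fin (d + 1) → ℝ, (∀ k, 0 ≤ x k) →
      volume {ω : Ω | x0 < X0 ω ∧ ∀ k, x k < X k ω}
        = ENNReal.ofReal
            (G.toFun (G.inv (F0.toFun x0) + ∑ k, G.inv ((F k).toFun (x k))))) :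
    ∀ t : Fin (d + 1) → ℝ, (∀ k, 0 ≤ t k) →
      volume {ω : Ω | ∀ k, t k < min (X0 ω) (X k ω)}
        = ENNReal.ofReal
            (G.toFun (G.inv (F0.toFun (Finset.univ.sup' Finset.univ_nonempty t))
              + ∑ k, G.inv ((F k).toFun (t k)))) := by
  intro t ht
  set M := Finset.univ.sup' Finset.univ_nonempty t with hM
  have hM0 : 0 ≤ M := le_trans (ht 0) (Finset.le_sup' t (Finset.mem_univ 0))
  have hset : {ω : Ω | ∀ k, t k < min (X0 ω) (X k ω)}
      = {ω : Ω | M < X0 ω ∧ ∀ k, t k < X k ω} := by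
    ext ω
    simp only [Set.mem_setOf_eq, lt_min_iff, hM, Finset.sup'_lt_iff, Finset.mem_univ,
      forall_true_left]
    constructor
    · intro h; exact ⟨fun k => (h k).1, fun k => (h k).2⟩
    · intro h k; exact ⟨h.1 k, h.2 k⟩
  rw [hset, hjoint M hM0 t ht]
end

section
/- Let ψ be a strict Archimedean generator and F̄_0,…,F̄_d survival functions. For k=1,…,d let H_{0,k} = ψ^{-1}∘F̄_0 + ψ^{-1}∘F̄_k (a continuous strictly increasing bijection of [0,∞) onto itself, with inverse H_{0,k}^{-1}), let D_k = ψ^{-1}∘F̄_k∘H_{0,k}^{-1}, let F̄_{τ_k} = ψ∘H_{0,k}, and let F̄_τ(t_1,…,t_d) = ψ( ψ^{-1}(F̄_0(max_{1≤k≤d} t_k)) + ∑_{k=1}^d ψ^{-1}(F̄_k(t_k)) ). Define Ĉ:(0,1]^d→(0,1] by Ĉ(u_1,…,u_d) = ψ( ψ^{-1}(u_j) + ∑_{k=1,k≠j}^d D_k(ψ^{-1}(u_k)) ), where j is the smallest index attaining max_{1≤i≤d} H_{0,i}^{-1}(ψ^{-1}(u_i)). Then F̄_τ(t_1,…,t_d)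 = Ĉ( F̄_{τ_1}(t_1), …, F̄_{τ_d}(t_d) ) for all (t_1,…,t_d)∈[0,∞)^d; that is, Ĉ is the survival copula of the default times. -/
open Set MeasureTheory

/-- The smallest index attaining the maximum of `g` over `Fin (n+1)`. -/
noncomputable def argmaxMin {n : ℕ} (g : Fin (n + 1) → ℝ) : Fin (n + 1) :=
  (Finset.univ.filter fun i => ∀ i', g i' ≤ g i).min' (by
    obtain ⟨j, -, hj⟩ :=
      Finset.exists_max_image (Finset.univ : Finset (Fin (n + 1))) g ⟨0, Finset.mem_univ 0⟩
    exact ⟨j, Finset.mem_filter.2 ⟨Finset.mem_univ j, fun i' => hj i' (Finset.mem_univ i')⟩⟩)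

lemma argmaxMin_spec {n : ℕ} (g : Fin (n + 1) → ℝ) : ∀ i, g i ≤ g (argmaxMin g) := by
  have h := Finset.min'_mem (Finset.univ.filter fun i => ∀ i', g i' ≤ g i) (by
    obtain ⟨j, -, hj⟩ :=
      Finset.exists_max_image (Finset.univ : Finset (Fin (n + 1))) g ⟨0, Finset.mem_univ 0⟩
    exact ⟨j, Finset.mem_filter.2 ⟨Finset.mem_univ j, fun i' => hj i' (Finset.mem_univ i')⟩⟩)
  exact (Finset.mem_filter.1 h).2

/-- the survival copula `Ĉ` of the default times in the exchangeable
Archimedean contagion model. -/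
theorem survival_copula_of_default_times
    {d : ℕ} (G : ArchGen) (F0 : SurvFun) (F : Fin (d + 1) → SurvFun)
    (Hinv : Fin (d + 1) → ℝ → ℝ)
    (hHinv_maps : ∀ k, MapsTo (Hinv k) (Ici 0) (Ici 0))
    (hHleft : ∀ k, ∀ x ∈ Ici (0:ℝ),
      Hinv k (G.inv (F0.toFun x) + G.inv ((F k).toFun x)) = x)
    (hHright : ∀ k, ∀ y ∈ Ici (0:ℝ),
      G.inv (F0.toFun (Hinv k y)) + G.inv ((F k).toFun (Hinv k y)) = y) :
    ∀ t : Fin (d + 1) → ℝ, (∀ k, 0 ≤ t k) →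
      G.toFun (G.inv (F0.toFun (Finset.univ.sup' Finset.univ_nonempty t))
          + ∑ k, G.inv ((F k).toFun (t k)))
        = (fun u : Fin (d + 1) → ℝ =>
            let j : Fin (d + 1) := argmaxMin fun i => Hinv i (G.inv (u i))
            G.toFun (G.inv (u j)
              + ∑ k ∈ Finset.univ.erase j, G.inv ((F k).toFun (Hinv k (G.inv (u k))))))
          (fun k => G.toFun (G.inv (F0.toFun (t k)) + G.inv ((F k).toFun (t k)))) := by
  intro t ht
  have hx : ∀ k, 0 ≤ G.inv (F0.toFun (t k)) + G.inv ((F k).toFun (t k)) := fun k =>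
    add_nonneg (G.inv_mapsTo (F0.mapsTo (ht k))) (G.inv_mapsTo ((F k).mapsTo (ht k)))
  have hinv : ∀ k, G.inv (G.toFun (G.inv (F0.toFun (t k)) + G.inv ((F k).toFun (t k))))
      = G.inv (F0.toFun (t k)) + G.inv ((F k).toFun (t k)) := fun k => G.leftInv _ (hx k)
  have hH : ∀ k, Hinv k (G.inv (F0.toFun (t k)) + G.inv ((F k).toFun (t k))) = t k :=
    fun k => hHleft k (t k) (ht k)
  simp only [hinv, hH]
  set j := argmaxMin t with hj
  have hmax : Finset.univ.sup' Finset.univ_nonempty t = t j := by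
    refine le_antisymm (Finset.sup'_le _ _ fun i _ => argmaxMin_spec t i)
      (Finset.le_sup' _ (Finset.mem_univ j))
  rw [hmax, ← Finset.sum_erase_add Finset.univ _ (Finset.mem_univ j)]
  ring_nf
end

section
/- Let θ≥1, let λ_0,λ_j,λ_k>0, and let K:[0,∞)→[0,∞) be a continuous strictly increasing bijection. Set α_j = λ_0/(λ_0+λ_j), α_k = λ_0/(λ_0+λ_k), F̄(s,t) = exp( −( λ_0K(max(s,t)) + λ_jK(s) + λ_kK(t) )^{1/θ} ), G_j(s) = exp( −((λ_0+λ_j)K(s))^{1/θ} ), G_k(t) = exp( −((λ_0+λ_k)K(t))^{1/θ} ). Define Ĉ_{j,k}:(0,1]²→(0,1] by Ĉ_{j,k}(u,v) = exp( −[ (−ln u)^θ + (1−α_k)(−ln v)^θ ]^{1/θ} ) if α_j(−ln u)^θ ≥ α_k(−ln v)^θ, and Ĉ_{j,k}(u,v) = exp( −[ (1−α_j)(−ln u)^θ + (−ln v)^θ ]^{1/θ} ) otherwise. Then F̄(s,t) = Ĉ_{j,k}( G_j(s), G_k(t) ) for all s,t∈[0,∞). -/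
/-!
With `ψ(x) = exp (-x ^ (1/θ))` and `ψ⁻¹(u) = (-log u) ^ θ`, the margins give
`ψ⁻¹(G_j s) = (λ₀ + λ_j) K(s)` and `ψ⁻¹(G_k t) = (λ₀ + λ_k) K(t)`, and the two branches of `Ĉ`
combine into the Marshall–Olkin form
`Ĉ(u, v) = ψ(max (α_j ψ⁻¹ u) (α_k ψ⁻¹ v) + (1 - α_j) ψ⁻¹ u + (1 - α_k) ψ⁻¹ v)`.
Since `α_j (λ₀ + λ_j) = λ₀` and `(1 - α_j)(λ₀ + λ_j) = λ_j`, monotonicity of `K` turns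
`max (λ₀ K s) (λ₀ K t)` into `λ₀ K (max s t)`, which is the exponent of `F̄`.
-/

open Set

theorem Real.rpow_neg_log_exp_neg_rpow_one_div {θ x : ℝ} (hθ : θ ≠ 0) (hx : 0 ≤ x) :
    (-Real.log (Real.exp (-x ^ (1 / θ)))) ^ θ = x := by
  rw [Real.log_exp, neg_neg, one_div, Real.rpow_inv_rpow hx hθ]

theorem ite_add_mul_eq_max_add {α β a b : ℝ} :
    (if β * b ≤ α * a then a + (1 - β) * b else (1 - α) * a + b) =
      max (α * a) (β * b) + (1 - α) * a + (1 - β) * b := by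
  split_ifs with h
  · rw [max_eq_left h]; ring
  · rw [max_eq_right (not_le.mp h).le]; ring

theorem div_add_mul_mul_add {a b : ℝ} (hab : a + b ≠ 0) (x : ℝ) :
    a / (a + b) * ((a + b) * x) = a * x := by
  field_simp

theorem one_sub_div_add_mul_mul_add {a b : ℝ} (hab : a + b ≠ 0) (x : ℝ) :
    (1 - a / (a + b)) * ((a + b) * x) = b * x := by
  field_simp; ring

theorem gumbel_bivariate_survival_copula_general
    (θ lam0 lamj lamk : ℝ) (hθ : 1 ≤ θ)
    (h0 : 0 < lam0) (hj : 0 < lamj) (hk : 0 < lamk)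
    (K : ℝ → ℝ) (hKm : StrictMonoOn K (Ici 0))
    (hKb : BijOn K (Ici 0) (Ici 0)) :
    let αj : ℝ := lam0 / (lam0 + lamj)
    let αk : ℝ := lam0 / (lam0 + lamk)
    let Fbar : ℝ → ℝ → ℝ := fun s t =>
      Real.exp (-(lam0 * K (max s t) + lamj * K s + lamk * K t) ^ (1 / θ))
    let Gj : ℝ → ℝ := fun s => Real.exp (-((lam0 + lamj) * K s) ^ (1 / θ))
    let Gk : ℝ → ℝ := fun t => Real.exp (-((lam0 + lamk) * K t) ^ (1 / θ))
    let Chat : ℝ → ℝ → ℝ := fun u v =>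
      if αk * (-Real.log v) ^ θ ≤ αj * (-Real.log u) ^ θ then
        Real.exp (-((-Real.log u) ^ θ + (1 - αk) * (-Real.log v) ^ θ) ^ (1 / θ))
      else
        Real.exp (-((1 - αj) * (-Real.log u) ^ θ + (-Real.log v) ^ θ) ^ (1 / θ))
    ∀ s t : ℝ, 0 ≤ s → 0 ≤ t → Fbar s t = Chat (Gj s) (Gk t) := by
  intro αj αk Fbar Gj Gk Chat s t hs ht
  have hj0 : 0 < lam0 + lamj := by linarith
  have hk0 : 0 < lam0 + lamk := by linarith
  have hKs : 0 ≤ K s := hKb.mapsTo hs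
  have hKt : 0 ≤ K t := hKb.mapsTo ht
  have hθ0 : θ ≠ 0 := by linarith
  simp only [Chat, Gj, Gk, αj, αk, ← apply_ite (fun x => Real.exp (-x ^ (1 / θ))),
    Real.rpow_neg_log_exp_neg_rpow_one_div hθ0 (mul_nonneg hj0.le hKs),
    Real.rpow_neg_log_exp_neg_rpow_one_div hθ0 (mul_nonneg hk0.le hKt), ite_add_mul_eq_max_add,
    div_add_mul_mul_add hj0.ne', div_add_mul_mul_add hk0.ne',
    one_sub_div_add_mul_mul_add hj0.ne', one_sub_div_add_mul_mul_add hk0.ne',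
    ← mul_max_of_nonneg _ _ h0.le, ← hKm.monotoneOn.map_max hs ht, Fbar]

/-- in the Gumbel contagion model, the bivariate joint survival function
of a pair of default times factors through the Archimedean-based Marshall-Olkin
(Archimax) survival copula `Ĉ_{j,k}`. -/
theorem gumbel_bivariate_survival_copula
    (θ lam0 lamj lamk : ℝ) (hθ : 1 ≤ θ)
    (h0 : 0 < lam0) (hj : 0 < lamj) (hk : 0 < lamk)
    (K : ℝ → ℝ) (hKc : ContinuousOn K (Ici 0)) (hKm : StrictMonoOn K (Ici 0))
    (hKb : BijOn K (Ici 0) (Ici 0)) :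
    let αj : ℝ := lam0 / (lam0 + lamj)
    let αk : ℝ := lam0 / (lam0 + lamk)
    let Fbar : ℝ → ℝ → ℝ := fun s t =>
      Real.exp (-(lam0 * K (max s t) + lamj * K s + lamk * K t) ^ (1 / θ))
    let Gj : ℝ → ℝ := fun s => Real.exp (-((lam0 + lamj) * K s) ^ (1 / θ))
    let Gk : ℝ → ℝ := fun t => Real.exp (-((lam0 + lamk) * K t) ^ (1 / θ))
    let Chat : ℝ → ℝ → ℝ := fun u v =>
      if αk * (-Real.log v) ^ θ ≤ αj * (-Real.log u) ^ θ then
        Real.exp (-((-Real.log u) ^ θ + (1 - αk) * (-Real.log v) ^ θ) ^ (1 / θ))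
      else
        Real.exp (-((1 - αj) * (-Real.log u) ^ θ + (-Real.log v) ^ θ) ^ (1 / θ))
    ∀ s t : ℝ, 0 ≤ s → 0 ≤ t → Fbar s t = Chat (Gj s) (Gk t) :=
  gumbel_bivariate_survival_copula_general θ lam0 lamj lamk hθ h0 hj hk K hKm hKb
end

section
/- Let ψ_θ and ψ_φ be strict Archimedean generators, ρ = ψ_φ^{-1}∘ψ_θ, and F̄_i, F̄_j, F̄_k survival functions. Define H_{0,j} = ψ_θ^{-1}∘F̄_i + ψ_θ^{-1}∘F̄_j and H_{0,k} = ψ_φ^{-1}∘F̄_i + ψ_φ^{-1}∘F̄_k (continuous strictly increasing bijections of [0,∞) onto itself), D_{ij} = ψ_θ^{-1}∘F̄_i∘H_{0,j}^{-1}, D_{ik} = ψ_θ^{-1}∘F̄_i∘H_{0,k}^{-1}, D_{ji} = ψ_θ^{-1}∘F̄_j∘H_{0,j}^{-1}, D_{ki} = ψ_φ^{-1}∘F̄_k∘H_{0,k}^{-1}. Let F̄_{τ_j,τ_k}(t_j,t_k) = ψ_φ( ψ_φ^{-1}( ψ_θ( ψ_θ^{-1}(F̄_i(max(t_j,t_k)))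 + ψ_θ^{-1}(F̄_j(t_j)) ) ) + ψ_φ^{-1}(F̄_k(t_k)) ), F̄_{τ_j} = ψ_θ∘H_{0,j}, F̄_{τ_k} = ψ_φ∘H_{0,k}. Define Ĉ:(0,1]²→(0,1] by: Ĉ(u,v) = ψ_φ( ψ_φ^{-1}(u) + D_{ki}(ψ_φ^{-1}(v)) ) if D_{ij}(ψ_θ^{-1}(u)) ≥ D_{ik}(ψ_φ^{-1}(v)), and Ĉ(u,v) = ψ_φ( ρ( D_{ik}(ψ_φ^{-1}(v)) + D_{ji}(ψ_θ^{-1}(u)) ) + D_{ki}(ψ_φ^{-1}(v)) ) otherwise. Then F̄_{τ_j,τ_k}(t_j,t_k) = Ĉ( F̄_{τ_j}(t_j), F̄_{τ_k}(t_k) ) for all t_j,t_k∈[0,∞); that is, Ĉ is the survival copula of (τ_j,τ_k). -/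
open Set MeasureTheory

/-!
Applying `ψ_θ⁻¹` to the margin `F̄_{τ_j}(t_j) = ψ_θ(H_{0,j}(t_j))` returns `H_{0,j}(t_j)`, which
`H_{0,j}⁻¹` turns back into `t_j`; likewise for `τ_k`. Hence the `D`'s evaluated at the margins
are just `ψ⁻¹ ∘ F̄` at the original times, and since `ψ_θ⁻¹ ∘ F̄_i` is strictly increasing the
branch condition `D_{ik} ≤ D_{ij}` says exactly `t_k ≤ t_j`, i.e. which time realises `max t_j t_k`.
-/

namespace ArchGen

variable (G : ArchGen)

lemma inv_survFun_nonneg (F : SurvFun) {t : ℝ} (ht : 0 ≤ t) : 0 ≤ G.inv (F.toFun t) :=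
  G.inv_mapsTo (F.mapsTo ht)

lemma strictAntiOn_inv : StrictAntiOn G.inv (Ioc 0 1) := by
  intro a ha b hb hab
  by_contra! h
  have := G.strictAntiOn.antitoneOn (G.inv_mapsTo ha) (G.inv_mapsTo hb) h
  rw [G.rightInv a ha, G.rightInv b hb] at this
  linarith

lemma strictMonoOn_inv_comp_survFun (F : SurvFun) :
    StrictMonoOn (fun t => G.inv (F.toFun t)) (Ici 0) :=
  fun _ hs _ ht hst => G.strictAntiOn_inv (F.mapsTo ht) (F.mapsTo hs) (F.strictAntiOn hs ht hst)

end ArchGen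

theorem hierarchical_survival_copula_systemic_inner_general
    (Gθ Gφ : ArchGen) (Fi Fj Fk : SurvFun)
    (H0jinv H0kinv : ℝ → ℝ)
    (hH0j_left : ∀ x ∈ Ici (0:ℝ),
      H0jinv (Gθ.inv (Fi.toFun x) + Gθ.inv (Fj.toFun x)) = x)
    (hH0k_left : ∀ x ∈ Ici (0:ℝ),
      H0kinv (Gφ.inv (Fi.toFun x) + Gφ.inv (Fk.toFun x)) = x) :
    let ρ : ℝ → ℝ := fun x => Gφ.inv (Gθ.toFun x)
    let Dij : ℝ → ℝ := fun x => Gθ.inv (Fi.toFun (H0jinv x))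
    let Dik : ℝ → ℝ := fun x => Gθ.inv (Fi.toFun (H0kinv x))
    let Dji : ℝ → ℝ := fun x => Gθ.inv (Fj.toFun (H0jinv x))
    let Dki : ℝ → ℝ := fun x => Gφ.inv (Fk.toFun (H0kinv x))
    let Chat : ℝ → ℝ → ℝ := fun u v =>
      if Dik (Gφ.inv v) ≤ Dij (Gθ.inv u) then
        Gφ.toFun (Gφ.inv u + Dki (Gφ.inv v))
      else
        Gφ.toFun (ρ (Dik (Gφ.inv v) + Dji (Gθ.inv u)) + Dki (Gφ.inv v))
    ∀ tj tk : ℝ, 0 ≤ tj → 0 ≤ tk →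
      Gφ.toFun (Gφ.inv (Gθ.toFun (Gθ.inv (Fi.toFun (max tj tk)) + Gθ.inv (Fj.toFun tj)))
          + Gφ.inv (Fk.toFun tk))
        = Chat (Gθ.toFun (Gθ.inv (Fi.toFun tj) + Gθ.inv (Fj.toFun tj)))
            (Gφ.toFun (Gφ.inv (Fi.toFun tk) + Gφ.inv (Fk.toFun tk))) := by
  intro ρ Dij Dik Dji Dki Chat tj tk htj htk
  have hu : Gθ.inv (Gθ.toFun (Gθ.inv (Fi.toFun tj) + Gθ.inv (Fj.toFun tj)))
      = Gθ.inv (Fi.toFun tj) + Gθ.inv (Fj.toFun tj) :=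
    Gθ.leftInv _ (add_nonneg (Gθ.inv_survFun_nonneg Fi htj) (Gθ.inv_survFun_nonneg Fj htj))
  have hv : Gφ.inv (Gφ.toFun (Gφ.inv (Fi.toFun tk) + Gφ.inv (Fk.toFun tk)))
      = Gφ.inv (Fi.toFun tk) + Gφ.inv (Fk.toFun tk) :=
    Gφ.leftInv _ (add_nonneg (Gφ.inv_survFun_nonneg Fi htk) (Gφ.inv_survFun_nonneg Fk htk))
  have hbranch : Gθ.inv (Fi.toFun tk) ≤ Gθ.inv (Fi.toFun tj) ↔ tk ≤ tj :=
    (Gθ.strictMonoOn_inv_comp_survFun Fi).le_iff_le htk htj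
  simp only [Chat, Dij, Dik, Dji, Dki, ρ, hu, hv, hH0j_left tj htj, hH0k_left tk htk, hbranch]
  split_ifs with hle
  · rw [max_eq_left hle]
  · rw [max_eq_right (not_le.mp hle).le]

/-- the survival copula of `(τ_j, τ_k) = (min(X_i,X_j), min(X_i,X_k))`
in the hierarchical contagion model with systemic shock `X_i`. -/
theorem hierarchical_survival_copula_systemic_inner
    (Gθ Gφ : ArchGen) (Fi Fj Fk : SurvFun)
    (H0jinv H0kinv : ℝ → ℝ)
    (hH0j_maps : MapsTo H0jinv (Ici 0) (Ici 0))
    (hH0k_maps : MapsTo H0kinv (Ici 0) (Ici 0))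
    (hH0j_left : ∀ x ∈ Ici (0:ℝ),
      H0jinv (Gθ.inv (Fi.toFun x) + Gθ.inv (Fj.toFun x)) = x)
    (hH0j_right : ∀ y ∈ Ici (0:ℝ),
      Gθ.inv (Fi.toFun (H0jinv y)) + Gθ.inv (Fj.toFun (H0jinv y)) = y)
    (hH0k_left : ∀ x ∈ Ici (0:ℝ),
      H0kinv (Gφ.inv (Fi.toFun x) + Gφ.inv (Fk.toFun x)) = x)
    (hH0k_right : ∀ y ∈ Ici (0:ℝ),
      Gφ.inv (Fi.toFun (H0kinv y)) + Gφ.inv (Fk.toFun (H0kinv y)) = y) :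
    let ρ : ℝ → ℝ := fun x => Gφ.inv (Gθ.toFun x)
    let Dij : ℝ → ℝ := fun x => Gθ.inv (Fi.toFun (H0jinv x))
    let Dik : ℝ → ℝ := fun x => Gθ.inv (Fi.toFun (H0kinv x))
    let Dji : ℝ → ℝ := fun x => Gθ.inv (Fj.toFun (H0jinv x))
    let Dki : ℝ → ℝ := fun x => Gφ.inv (Fk.toFun (H0kinv x))
    let Chat : ℝ → ℝ → ℝ := fun u v =>
      if Dik (Gφ.inv v) ≤ Dij (Gθ.inv u) then
        Gφ.toFun (Gφ.inv u + Dki (Gφ.inv v))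
      else
        Gφ.toFun (ρ (Dik (Gφ.inv v) + Dji (Gθ.inv u)) + Dki (Gφ.inv v))
    ∀ tj tk : ℝ, 0 ≤ tj → 0 ≤ tk →
      Gφ.toFun (Gφ.inv (Gθ.toFun (Gθ.inv (Fi.toFun (max tj tk)) + Gθ.inv (Fj.toFun tj)))
          + Gφ.inv (Fk.toFun tk))
        = Chat (Gθ.toFun (Gθ.inv (Fi.toFun tj) + Gθ.inv (Fj.toFun tj)))
            (Gφ.toFun (Gφ.inv (Fi.toFun tk) + Gφ.inv (Fk.toFun tk))) :=
  hierarchical_survival_copula_systemic_inner_general Gθ Gφ Fi Fj Fk H0jinv H0kinv hH0j_left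
    hH0k_left
end

section
/- Let ψ_θ and ψ_φ be strict Archimedean generators, ρ = ψ_φ^{-1}∘ψ_θ, and F̄_i, F̄_j, F̄_k survival functions. Define H_{0,i} = ψ_φ^{-1}∘F̄_i + ψ_φ^{-1}∘F̄_k and H_{0,j} = ψ_φ^{-1}∘F̄_j + ψ_φ^{-1}∘F̄_k (continuous strictly increasing bijections of [0,∞) onto itself), D_{ik} = ψ_φ^{-1}∘F̄_i∘H_{0,i}^{-1}, D_{jk} = ψ_φ^{-1}∘F̄_j∘H_{0,j}^{-1}, D_{ki} = ψ_φ^{-1}∘F̄_k∘H_{0,i}^{-1}, D_{kj} = ψ_φ^{-1}∘F̄_k∘H_{0,j}^{-1}. Let F̄_{τ_i,τ_j}(t_i,t_j) = ψ_φ( ρ( ρ^{-1}(ψ_φ^{-1}(F̄_i(t_i))) + ρ^{-1}(ψ_φ^{-1}(F̄_j(t_j))) ) + ψ_φ^{-1}(F̄_k(max(t_i,t_j))) ), F̄_{τ_i} = ψ_φ∘H_{0,i}, F̄_{τ_j} = ψ_φ∘H_{0,j}. Define Ĉ:(0,1]²→(0,1] by Ĉ(u,v) = ψ_φ( ρ(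 ρ^{-1}(D_{ik}(ψ_φ^{-1}(u))) + ρ^{-1}(D_{jk}(ψ_φ^{-1}(v))) ) + max( D_{ki}(ψ_φ^{-1}(u)), D_{kj}(ψ_φ^{-1}(v)) ) ). Then F̄_{τ_i,τ_j}(t_i,t_j) = Ĉ( F̄_{τ_i}(t_i), F̄_{τ_j}(t_j) ) for all t_i,t_j∈[0,∞); that is, Ĉ is the survival copula of (τ_i,τ_j). -/
/-!
Evaluating `Ĉ` at `u = ψ_φ(H_{0,i}(t_i))`, `v = ψ_φ(H_{0,j}(t_j))` undoes `ψ_φ` and `H_{0,·}`,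
so `D_{ik}`, `D_{jk}` return `ψ_φ⁻¹(F̄_i t_i)`, `ψ_φ⁻¹(F̄_j t_j)` and `D_{ki}`, `D_{kj}` return
`ψ_φ⁻¹(F̄_k t_i)`, `ψ_φ⁻¹(F̄_k t_j)`. Since `ψ_φ⁻¹ ∘ F̄_k` is nondecreasing, the maximum of the
last two is `ψ_φ⁻¹(F̄_k (max t_i t_j))`.
-/

open Set MeasureTheory

namespace ArchGen

variable (G : ArchGen)

theorem inv_antitoneOn : AntitoneOn G.inv (Ioc 0 1) := fun u hu v hv huv => by
  rwa [← G.strictAntiOn.le_iff_ge (G.inv_mapsTo hu) (G.inv_mapsTo hv), G.rightInv u hu,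
    G.rightInv v hv]

theorem monotoneOn_inv_comp (F : SurvFun) : MonotoneOn (G.inv ∘ F.toFun) (Ici 0) :=
  G.inv_antitoneOn.comp F.strictAntiOn.antitoneOn F.mapsTo

theorem inv_comp_max (F : SurvFun) {s t : ℝ} (hs : 0 ≤ s) (ht : 0 ≤ t) :
    G.inv (F.toFun (max s t)) = max (G.inv (F.toFun s)) (G.inv (F.toFun t)) :=
  (G.monotoneOn_inv_comp F).map_max hs ht

theorem inv_add_inv_nonneg (F F' : SurvFun) {t : ℝ} (ht : 0 ≤ t) :
    0 ≤ G.inv (F.toFun t) + G.inv (F'.toFun t) :=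
  add_nonneg (G.inv_mapsTo (F.mapsTo ht)) (G.inv_mapsTo (F'.mapsTo ht))

end ArchGen

theorem hierarchical_survival_copula_systemic_outer_general
    (Gφ : ArchGen) (Fi Fj Fk : SurvFun)
    (ρ ρinv : ℝ → ℝ)
    (H0iinv H0jinv : ℝ → ℝ)
    (hH0i_left : ∀ x ∈ Ici (0:ℝ),
      H0iinv (Gφ.inv (Fi.toFun x) + Gφ.inv (Fk.toFun x)) = x)
    (hH0j_left : ∀ x ∈ Ici (0:ℝ),
      H0jinv (Gφ.inv (Fj.toFun x) + Gφ.inv (Fk.toFun x)) = x) :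
    let Dik : ℝ → ℝ := fun x => Gφ.inv (Fi.toFun (H0iinv x))
    let Djk : ℝ → ℝ := fun x => Gφ.inv (Fj.toFun (H0jinv x))
    let Dki : ℝ → ℝ := fun x => Gφ.inv (Fk.toFun (H0iinv x))
    let Dkj : ℝ → ℝ := fun x => Gφ.inv (Fk.toFun (H0jinv x))
    let Chat : ℝ → ℝ → ℝ := fun u v =>
      Gφ.toFun (ρ (ρinv (Dik (Gφ.inv u)) + ρinv (Djk (Gφ.inv v)))
        + max (Dki (Gφ.inv u)) (Dkj (Gφ.inv v)))
    ∀ ti tj : ℝ, 0 ≤ ti → 0 ≤ tj →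
      Gφ.toFun (ρ (ρinv (Gφ.inv (Fi.toFun ti)) + ρinv (Gφ.inv (Fj.toFun tj)))
          + Gφ.inv (Fk.toFun (max ti tj)))
        = Chat (Gφ.toFun (Gφ.inv (Fi.toFun ti) + Gφ.inv (Fk.toFun ti)))
            (Gφ.toFun (Gφ.inv (Fj.toFun tj) + Gφ.inv (Fk.toFun tj))) := by
  intro Dik Djk Dki Dkj Chat ti tj hti htj
  have hsumi := Gφ.inv_add_inv_nonneg Fi Fk hti
  have hsumj := Gφ.inv_add_inv_nonneg Fj Fk htj
  simp only [Chat, Dik, Djk, Dki, Dkj, Gφ.leftInv _ hsumi, Gφ.leftInv _ hsumj,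
    hH0i_left ti hti, hH0j_left tj htj, Gφ.inv_comp_max Fk hti htj]

/-- the survival copula of `(τ_i, τ_j) = (min(X_i,X_k), min(X_j,X_k))`
in the hierarchical contagion model with systemic shock `X_k`. -/
theorem hierarchical_survival_copula_systemic_outer
    (Gθ Gφ : ArchGen) (Fi Fj Fk : SurvFun)
    (ρ ρinv : ℝ → ℝ)
    (hρ : ∀ x, ρ x = Gφ.inv (Gθ.toFun x))
    (hρinv_left : ∀ x ∈ Ici (0:ℝ), ρinv (ρ x) = x)
    (hρinv_right : ∀ y ∈ Ici (0:ℝ), ρ (ρinv y) = y)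
    (H0iinv H0jinv : ℝ → ℝ)
    (hH0i_maps : MapsTo H0iinv (Ici 0) (Ici 0))
    (hH0j_maps : MapsTo H0jinv (Ici 0) (Ici 0))
    (hH0i_left : ∀ x ∈ Ici (0:ℝ),
      H0iinv (Gφ.inv (Fi.toFun x) + Gφ.inv (Fk.toFun x)) = x)
    (hH0i_right : ∀ y ∈ Ici (0:ℝ),
      Gφ.inv (Fi.toFun (H0iinv y)) + Gφ.inv (Fk.toFun (H0iinv y)) = y)
    (hH0j_left : ∀ x ∈ Ici (0:ℝ),
      H0jinv (Gφ.inv (Fj.toFun x) + Gφ.inv (Fk.toFun x)) = x)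
    (hH0j_right : ∀ y ∈ Ici (0:ℝ),
      Gφ.inv (Fj.toFun (H0jinv y)) + Gφ.inv (Fk.toFun (H0jinv y)) = y) :
    let Dik : ℝ → ℝ := fun x => Gφ.inv (Fi.toFun (H0iinv x))
    let Djk : ℝ → ℝ := fun x => Gφ.inv (Fj.toFun (H0jinv x))
    let Dki : ℝ → ℝ := fun x => Gφ.inv (Fk.toFun (H0iinv x))
    let Dkj : ℝ → ℝ := fun x => Gφ.inv (Fk.toFun (H0jinv x))
    let Chat : ℝ → ℝ → ℝ := fun u v =>
      Gφ.toFun (ρ (ρinv (Dik (Gφ.inv u)) + ρinv (Djk (Gφ.inv v)))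
        + max (Dki (Gφ.inv u)) (Dkj (Gφ.inv v)))
    ∀ ti tj : ℝ, 0 ≤ ti → 0 ≤ tj →
      Gφ.toFun (ρ (ρinv (Gφ.inv (Fi.toFun ti)) + ρinv (Gφ.inv (Fj.toFun tj)))
          + Gφ.inv (Fk.toFun (max ti tj)))
        = Chat (Gφ.toFun (Gφ.inv (Fi.toFun ti) + Gφ.inv (Fk.toFun ti)))
            (Gφ.toFun (Gφ.inv (Fj.toFun tj) + Gφ.inv (Fk.toFun tj))) :=
  hierarchical_survival_copula_systemic_outer_general Gφ Fi Fj Fk ρ ρinv H0iinv H0jinv hH0i_left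
    hH0j_left
end
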